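/- Let Ω ⊂ R^n be open, f : Ω → R, and suppose there is an increasing sequence of closed sets B_k ⊂ B_{k+1} ⊂ Ω with f|_{B_k} Lipschitz continuous for each k and cap_p(Ω \ ∪_k B_k) = 0. Let A be a compact set with A ⊂ ∪_k Int(B_k). Then for every ε > 0 there exists a Borel set A_ε ⊂ A such that f|_{A_ε} is Lipschitz continuous and cap_p(A \ A_ε) ≤ ε. -/

import Mathlib

open MeasureTheory Metric Filter Set
open scoped ENNReal Topology NNReal

noncomputable section

/-- Euclidean space ℝⁿ. -/
abbrev En (n : ℕ) := EuclideanSpace ℝ (Fin n)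

variable {n : ℕ}

/-- The average of `f` over the ball `B(x,r)`. -/
def ballAvg (f : En n → ℝ) (x : En n) (r : ℝ) : ℝ :=
  ⨍ y in Metric.ball x r, f y

open scoped Classical in
/-- The precise representative of `f`: the limit of ball averages where it exists, `0` otherwise. -/
def preciseRep (f : En n → ℝ) (x : En n) : ℝ :=
  if h : ∃ L : ℝ, Tendsto (fun r => ballAvg f x r) (nhdsWithin 0 (Set.Ioi 0)) (nhds L)
  then h.choose else 0

/-- A test function: smooth, compactly supported, with support inside `Ω`. -/
def IsTest (Ω : Set (En n)) (η : En n → ℝ) : Prop :=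
  ContDiff ℝ (⊤ : ℕ∞) η ∧ HasCompactSupport η ∧ tsupport η ⊆ Ω

/-- `g` is the weak partial derivative of `f` in direction `v`, on `Ω`. -/
def HasWeakPartialOn (Ω : Set (En n)) (f g : En n → ℝ) (v : En n) : Prop :=
  ∀ η : En n → ℝ, IsTest Ω η →
    ∫ x, f x * fderiv ℝ η x v = - ∫ x, g x * η x

/-- `g` is the weak gradient of `f` on `Ω`. -/
def HasWeakGradientOn (Ω : Set (En n)) (f : En n → ℝ) (g : En n → En n) : Prop :=
  ∀ i : Fin n, HasWeakPartialOn Ω f (fun x => g x i) (EuclideanSpace.single i 1)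

/-- `f ∈ W^{1,p}(ℝⁿ)` with weak gradient `g`. -/
def MemW1p (p : ℝ) (f : En n → ℝ) (g : En n → En n) : Prop :=
  AEStronglyMeasurable f volume ∧ AEStronglyMeasurable g volume ∧
  HasWeakGradientOn Set.univ f g ∧
  Integrable (fun x => |f x| ^ p) ∧ Integrable (fun x => ‖g x‖ ^ p)

/-- `f ∈ W^{1,p}_loc(Ω)` with weak gradient `g`. -/
def MemW1pLoc (p : ℝ) (Ω : Set (En n)) (f : En n → ℝ) (g : En n → En n) : Prop :=
  AEStronglyMeasurable f volume ∧ AEStronglyMeasurable g volume ∧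
  HasWeakGradientOn Ω f g ∧
  ∀ K : Set (En n), K ⊆ Ω → IsCompact K →
    IntegrableOn (fun x => |f x| ^ p) K ∧ IntegrableOn (fun x => ‖g x‖ ^ p) K

/-- `f ∈ W^{2,p}_loc(Ω)` with weak gradient `g` and weak second derivatives `h`. -/
def MemW2pLoc (p : ℝ) (Ω : Set (En n)) (f : En n → ℝ)
    (g : En n → En n) (h : En n → Fin n → En n) : Prop :=
  AEStronglyMeasurable f volume ∧ AEStronglyMeasurable g volume ∧
  HasWeakGradientOn Ω f g ∧
  (∀ i : Fin n, HasWeakGradientOn Ω (fun x => g x i) (fun x => h x i)) ∧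
  ∀ K : Set (En n), K ⊆ Ω → IsCompact K →
    IntegrableOn (fun x => |f x| ^ p) K ∧ IntegrableOn (fun x => ‖g x‖ ^ p) K ∧
    ∀ i : Fin n, IntegrableOn (fun x => ‖h x i‖ ^ p) K

/-- `f ∈ W^{2,p}(ℝⁿ)` with weak gradient `g` and weak second derivatives `h`. -/
def MemW2p (p : ℝ) (f : En n → ℝ) (g : En n → En n) (h : En n → Fin n → En n) : Prop :=
  AEStronglyMeasurable f volume ∧ AEStronglyMeasurable g volume ∧
  HasWeakGradientOn Set.univ f g ∧
  (∀ i : Fin n, HasWeakGradientOn Set.univ (fun x => g x i) (fun x => h x i)) ∧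
  Integrable (fun x => |f x| ^ p) ∧ Integrable (fun x => ‖g x‖ ^ p) ∧
  ∀ i : Fin n, Integrable (fun x => ‖h x i‖ ^ p)

/-- The `p`-capacity of a compact set. -/
def capK (p : ℝ) (F : Set (En n)) : ℝ≥0∞ :=
  ⨅ (g : En n → ℝ) (_ : ContDiff ℝ (⊤ : ℕ∞) g ∧ HasCompactSupport g ∧ ∀ x ∈ F, 1 ≤ g x),
    ∫⁻ x, (‖fderiv ℝ g x‖₊ : ℝ≥0∞) ^ p

/-- The `p`-capacity of an open set, by inner regularity over compact subsets. -/
def capOpen (p : ℝ) (U : Set (En n)) : ℝ≥0∞ :=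
  ⨆ (F : Set (En n)) (_ : F ⊆ U ∧ IsCompact F), capK p F

/-- The `p`-capacity of an arbitrary set, by outer regularity over open supersets. -/
def cap (p : ℝ) (E : Set (En n)) : ℝ≥0∞ :=
  ⨅ (U : Set (En n)) (_ : E ⊆ U ∧ IsOpen U), capOpen p U

/-- `f` restricted to `s` is Lipschitz outside a subset of `s` of `p`-capacity zero. -/
def LipschitzOnQE (p : ℝ) (f : En n → ℝ) (s : Set (En n)) : Prop :=
  ∃ N : Set (En n), N ⊆ s ∧ cap p N = 0 ∧ ∃ K : ℝ≥0, LipschitzOnWith K f (s \ N)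

/-- The multiplicity function: the number of preimages of `y` in `A` under `φ`. -/
def Nphi (φ : En n → En n) (A : Set (En n)) (y : En n) : ℝ≥0∞ :=
  Measure.count {x ∈ A | φ x = y}

end

/-- the Luzin type theorem for capacity on compact subsets of the union of
interiors. -/
theorem luzin_capacity_compact {n : ℕ} (Ω : Set (En n)) (hΩ : IsOpen Ω)
    (p : ℝ) (hp : 1 ≤ p) (f : En n → ℝ)
    (B : ℕ → Set (En n))
    (hBclosed : ∀ k, IsClosed (B k)) (hBmono : ∀ k, B k ⊆ B (k + 1))
    (hBΩ : ∀ k, B k ⊆ Ω)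
    (hBlip : ∀ k, ∃ K : ℝ≥0, LipschitzOnWith K f (B k))
    (hcap : cap p (Ω \ ⋃ k, B k) = 0)
    (A : Set (En n)) (hA : IsCompact A) (hAint : A ⊆ ⋃ k, interior (B k)) :
    ∀ ε : ℝ≥0∞, 0 < ε →
      ∃ Aε : Set (En n), Aε ⊆ A ∧ MeasurableSet Aε ∧
        (∃ K : ℝ≥0, LipschitzOnWith K f Aε) ∧
        cap p (A \ Aε) ≤ ε := by
  intro ε hε
  -- By compactness, A is covered by finitely many interiors, hence by one interior (B N).
  obtain ⟨t, ht⟩ := hA.elim_finite_subcover (fun k => interior (B k))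
    (fun k => isOpen_interior) hAint
  have hBmono' : Monotone B := monotone_nat_of_le_succ hBmono
  have hAB : ∃ N, A ⊆ B N := by
    rcases t.eq_empty_or_nonempty with h | h
    · subst h
      refine ⟨0, fun x hx => ?_⟩
      simpa using ht hx
    · obtain ⟨N, hN⟩ := t.exists_le
      refine ⟨N, fun x hx => ?_⟩
      obtain ⟨k, hk, hxk⟩ := Set.mem_iUnion₂.1 (ht hx)
      exact hBmono' (hN k hk) (interior_subset hxk)
  obtain ⟨N, hAN⟩ := hAB
  obtain ⟨K, hK⟩ := hBlip N
  refine ⟨A, Set.Subset.refl A, hA.isClosed.measurableSet,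
    ⟨K, hK.mono hAN⟩, ?_⟩
  rw [Set.diff_self]
  -- cap p ∅ = 0
  have hcapK : capK p (∅ : Set (En n)) = 0 := by
    refine le_antisymm ?_ zero_le
    have : capK p (∅ : Set (En n)) ≤ ∫⁻ x, (‖fderiv ℝ (fun _ : En n => (0:ℝ)) x‖₊ : ℝ≥0∞) ^ p := by
      refine iInf₂_le (fun _ => (0:ℝ)) ?_
      refine ⟨contDiff_const, ?_, fun x hx => absurd hx (Set.notMem_empty x)⟩
      rw [hasCompactSupport_def]
      simp
    refine le_trans this ?_
    have hp0 : (0:ℝ) < p := lt_of_lt_of_le zero_lt_one hp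
    simp [fderiv_fun_const, hp0.ne', hp0]
  have hcapOpen : capOpen p (∅ : Set (En n)) = 0 := by
    refine le_antisymm ?_ zero_le
    refine iSup₂_le fun F hF => ?_
    have : F = ∅ := Set.subset_empty_iff.1 hF.1
    rw [this, hcapK]
  calc cap p (∅ : Set (En n)) ≤ capOpen p ∅ :=
        iInf₂_le ∅ ⟨Set.Subset.refl _, isOpen_empty⟩
    _ = 0 := hcapOpen
    _ ≤ ε := zero_le
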